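/- Fix integers M, N ≥ 1, a check matrix S ∈ {I,X,Y,Z}^{M×N} such that N(m) := {n : S_{mn} ≠ I} is nonempty for every m, a syndrome vector z ∈ {0,1}^M, a vector Λ = (Λ_n^W) ∈ ℝ^{3N}, and η > 0. Define J : ℝ^{3N} → ℝ by J(Γ) = (1/2)‖Γ − Λ‖₂² − η Σ_{m=1}^M 2 artanh((−1)^{z_m} ∏_{n ∈ N(m)} tanh(λ_{S_{mn}}(Γ_n)/2)), which is well defined since each product lies in (−1,1). Then J is differentiable and, for every n and every W ∈ {X,Y,Z}, the partial derivative satisfies ∂J/∂Γ_n^W(Γ) = Γ_n^W − Λ_n^W + Σ_{m ∈ M(n), S_{mn} = W} η g_{mn}(Γ) (e^{−Γ_n^W}/(1 + e^{−Γ_n^W})) Δ̃_{m→n} − Σ_{m ∈ M(n), S_{mn} ∈ {X,Y,Z}\{W}} η g_{mn}(Γ) (e^{−Γ_n^W}/(e^{−Γ_n^X} + e^{−Γ_n^Y} + e^{−Γ_n^Z} − e^{−Γ_n^{S_{mn}}})) Δ̃_{m→n}, where M(n) = {m : S_{mn} ≠ I}, g_{mn}(Γ) = (1 − tanh²(λ_{S_{mn}}(Γ_n)/2))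 / (1 − (∏_{l ∈ N(m)} tanh(λ_{S_{ml}}(Γ_l)/2))²), and Δ̃_{m→n} = (−1)^{z_m} ∏_{n' ∈ N(m)\{n}} tanh(λ_{S_{mn'}}(Γ_{n'})/2). -/

import Mathlib

/-- The non-identity single-qubit Pauli labels `X`, `Y`, `Z`. -/
inductive PauliNI : Type
  | X | Y | Z
deriving DecidableEq

instance instFintypePauliNI : Fintype PauliNI :=
  ⟨{PauliNI.X, PauliNI.Y, PauliNI.Z}, fun x => by cases x <;> simp⟩

/-- The single-qubit Pauli labels `I`, `X`, `Y`, `Z`. -/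
inductive Pauli : Type
  | I | X | Y | Z
deriving DecidableEq

instance instFintypePauli : Fintype Pauli :=
  ⟨{Pauli.I, Pauli.X, Pauli.Y, Pauli.Z}, fun x => by cases x <;> simp⟩

/-- Inclusion of the non-identity Pauli labels into all Pauli labels. -/
def PauliNI.toP : PauliNI → Pauli
  | .X => .X
  | .Y => .Y
  | .Z => .Z

open Real

/-- The function `λ_W : ℝ³ → ℝ`,
`λ_W(γ) = ln((1 + e^{−γ^W}) / (e^{−γ^X} + e^{−γ^Y} + e^{−γ^Z} − e^{−γ^W}))`. -/
noncomputable def lam (W : PauliNI) (γ : PauliNI → ℝ) : ℝ :=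
  Real.log ((1 + Real.exp (-(γ W))) /
    (Real.exp (-(γ PauliNI.X)) + Real.exp (-(γ PauliNI.Y)) + Real.exp (-(γ PauliNI.Z))
      - Real.exp (-(γ W))))

/-- `λ` indexed by a Pauli label (with junk value `0` at `I`, which is never used since
products run over indices with `S_{mn} ≠ I`). -/
noncomputable def lamP : Pauli → (PauliNI → ℝ) → ℝ
  | .I => fun _ => 0
  | .X => lam .X
  | .Y => lam .Y
  | .Z => lam .Z

/-- `e^{−γ^P}` for a Pauli label `P` (junk value `0` at `I`). -/
noncomputable def pexp : Pauli → (PauliNI → ℝ) → ℝ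
  | .I => fun _ => 0
  | .X => fun γ => Real.exp (-(γ PauliNI.X))
  | .Y => fun γ => Real.exp (-(γ PauliNI.Y))
  | .Z => fun γ => Real.exp (-(γ PauliNI.Z))

/-- The inverse hyperbolic tangent `artanh(x) = (1/2) ln((1+x)/(1−x))` for `x ∈ (−1,1)`. -/
noncomputable def artanh (x : ℝ) : ℝ := (1 / 2) * Real.log ((1 + x) / (1 - x))

/-- The BP energy function
`J(Γ) = (1/2)‖Γ − Λ‖₂² − η Σ_m 2 artanh((−1)^{z_m} ∏_{n ∈ N(m)} tanh(λ_{S_{mn}}(Γ_n)/2))`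
(Eqs. (6)–(7) of the paper). -/
noncomputable def Jenergy {M N : ℕ} (S : Fin M → Fin N → Pauli) (z : Fin M → Fin 2)
    (Λ : Fin N → PauliNI → ℝ) (η : ℝ) (Γ : Fin N → PauliNI → ℝ) : ℝ :=
  (1 / 2) * ∑ n, ∑ W, (Γ n W - Λ n W) ^ 2
    - η * ∑ m, 2 * _root_.artanh ((-1 : ℝ) ^ (z m : ℕ) *
        ∏ n ∈ Finset.univ.filter (fun n => S m n ≠ Pauli.I),
          Real.tanh (lamP (S m n) (Γ n) / 2))

/-- The gradient factor `g_{mn}(Γ)` of Eq. (9). -/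
noncomputable def gfac {M N : ℕ} (S : Fin M → Fin N → Pauli) (Γ : Fin N → PauliNI → ℝ)
    (m : Fin M) (n : Fin N) : ℝ :=
  (1 - Real.tanh (lamP (S m n) (Γ n) / 2) ^ 2) /
    (1 - (∏ l ∈ Finset.univ.filter (fun l => S m l ≠ Pauli.I),
        Real.tanh (lamP (S m l) (Γ l) / 2)) ^ 2)

/-- The message `Δ̃_{m→n} = (−1)^{z_m} ∏_{n' ∈ N(m)\{n}} tanh(λ_{S_{mn'}}(Γ_{n'})/2)`
of Eq. (10). -/
noncomputable def tilDelta {M N : ℕ} (S : Fin M → Fin N → Pauli) (z : Fin M → Fin 2)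
    (Γ : Fin N → PauliNI → ℝ) (m : Fin M) (n : Fin N) : ℝ :=
  (-1 : ℝ) ^ (z m : ℕ) *
    ∏ n' ∈ (Finset.univ.filter (fun l => S m l ≠ Pauli.I)).erase n,
      Real.tanh (lamP (S m n') (Γ n') / 2)


section Aux

open Real Finset

lemma hasDerivAt_expneg (t : ℝ) : HasDerivAt (fun s : ℝ => Real.exp (-s)) (-Real.exp (-t)) t := by
  simpa using ((hasDerivAt_id t).neg).exp

lemma hd_log_div {u v : ℝ → ℝ} {u' v' t : ℝ} (hu : HasDerivAt u u' t) (hv : HasDerivAt v v' t)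
    (hu0 : 0 < u t) (hv0 : 0 < v t) :
    HasDerivAt (fun s => Real.log (u s / v s)) (u' / u t - v' / v t) t := by
  have h := (hu.fun_div hv hv0.ne').log (by positivity)
  convert h using 1
  field_simp

lemma hasDerivAt_tanh' (x : ℝ) : HasDerivAt Real.tanh (1 - Real.tanh x ^ 2) x := by
  have h := (Real.hasDerivAt_sinh x).fun_div (Real.hasDerivAt_cosh x) (Real.cosh_pos x).ne'
  have he : Real.tanh = fun y => Real.sinh y / Real.cosh y :=
    funext fun y => Real.tanh_eq_sinh_div_cosh y
  rw [he]
  refine h.congr_deriv ?_; symm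
  have hc := (Real.cosh_pos x).ne'
  beta_reduce
  field_simp

lemma abs_tanh_lt_one (x : ℝ) : |Real.tanh x| < 1 := by
  have h1 := Real.cosh_pos x
  have h2 : Real.cosh x + Real.sinh x = Real.exp x := Real.cosh_add_sinh x
  have h3 : Real.cosh x - Real.sinh x = Real.exp (-x) := Real.cosh_sub_sinh x
  have h4 := Real.exp_pos x
  have h5 := Real.exp_pos (-x)
  rw [Real.tanh_eq_sinh_div_cosh, abs_div, abs_of_pos h1, div_lt_one h1, abs_lt]
  constructor <;> linarith

lemma hasDerivAt_artanh {x : ℝ} (h : |x| < 1) : HasDerivAt _root_.artanh (1 / (1 - x ^ 2)) x := by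
  obtain ⟨h1, h2⟩ := abs_lt.mp h
  have hx1 : (0:ℝ) < 1 + x := by linarith
  have hx2 : (0:ℝ) < 1 - x := by linarith
  have hu : HasDerivAt (fun y : ℝ => 1 + y) 1 x := (hasDerivAt_id x).const_add 1
  have hv : HasDerivAt (fun y : ℝ => 1 - y) (-1) x := (hasDerivAt_id x).const_sub 1
  have hlog := hd_log_div hu hv hx1 hx2
  have := hlog.const_mul (1/2 : ℝ)
  have hx3 : (1 - x^2) ≠ 0 := by nlinarith
  refine this.congr_deriv ?_; symm
  field_simp
  ring

end Aux

lemma toP_ne_I (W : PauliNI) : W.toP ≠ Pauli.I := by cases W <;> simp [PauliNI.toP]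

lemma den_pos (γ : PauliNI → ℝ) (P : Pauli) :
    0 < Real.exp (-(γ PauliNI.X)) + Real.exp (-(γ PauliNI.Y)) + Real.exp (-(γ PauliNI.Z))
        - pexp P γ := by
  have h1 := Real.exp_pos (-(γ PauliNI.X))
  have h2 := Real.exp_pos (-(γ PauliNI.Y))
  have h3 := Real.exp_pos (-(γ PauliNI.Z))
  cases P <;> simp only [pexp] <;> linarith

lemma abs_prod_tanh_lt_one {α : Type*} [DecidableEq α] (s : Finset α) (hs : s.Nonempty)
    (f : α → ℝ) : |∏ i ∈ s, Real.tanh (f i)| < 1 := by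
  obtain ⟨i, hi⟩ := hs
  rw [Finset.abs_prod]
  calc ∏ j ∈ s, |Real.tanh (f j)|
      = |Real.tanh (f i)| * ∏ j ∈ s.erase i, |Real.tanh (f j)| :=
        (Finset.mul_prod_erase _ _ hi).symm
    _ ≤ |Real.tanh (f i)| * 1 := by
        apply mul_le_mul_of_nonneg_left _ (abs_nonneg _)
        exact Finset.prod_le_one (fun j _ => abs_nonneg _)
          (fun j _ => (_root_.abs_tanh_lt_one (f j)).le)
    _ < 1 := by rw [mul_one]; exact _root_.abs_tanh_lt_one (f i)

lemma differentiable_tanh : Differentiable ℝ Real.tanh :=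
  fun x => (hasDerivAt_tanh' x).differentiableAt

lemma pexp_toP (W : PauliNI) (γ : PauliNI → ℝ) : pexp W.toP γ = Real.exp (-(γ W)) := by
  cases W <;> rfl

lemma diff_eval {N : ℕ} (n : Fin N) (W : PauliNI) :
    Differentiable ℝ (fun Γ : Fin N → PauliNI → ℝ => Γ n W) := by
  have h1 : Differentiable ℝ (fun Γ : Fin N → PauliNI → ℝ => Γ n) :=
    differentiable_pi.mp differentiable_id n
  exact differentiable_pi.mp h1 W

lemma differentiable_lam_comp {N : ℕ} (W' : PauliNI) (n : Fin N) :
    Differentiable ℝ (fun Γ : Fin N → PauliNI → ℝ => lam W' (Γ n)) := by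
  intro Γ
  have hnum : DifferentiableAt ℝ
      (fun Γ' : Fin N → PauliNI → ℝ => 1 + Real.exp (-(Γ' n W'))) Γ :=
    (((diff_eval n W').neg.exp).const_add 1) Γ
  have hden : DifferentiableAt ℝ
      (fun Γ' : Fin N → PauliNI → ℝ => Real.exp (-(Γ' n PauliNI.X)) +
        Real.exp (-(Γ' n PauliNI.Y)) + Real.exp (-(Γ' n PauliNI.Z)) -
        Real.exp (-(Γ' n W'))) Γ := by
    have h1 := ((diff_eval n PauliNI.X).neg.exp : Differentiable ℝ _)
    have h2 := ((diff_eval n PauliNI.Y).neg.exp : Differentiable ℝ _)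
    have h3 := ((diff_eval n PauliNI.Z).neg.exp : Differentiable ℝ _)
    have h4 := ((diff_eval n W').neg.exp : Differentiable ℝ _)
    exact (((h1.add h2).add h3).sub h4) Γ
  have hdpos : 0 < Real.exp (-(Γ n PauliNI.X)) + Real.exp (-(Γ n PauliNI.Y)) +
      Real.exp (-(Γ n PauliNI.Z)) - Real.exp (-(Γ n W')) := by
    have := den_pos (Γ n) W'.toP
    rwa [pexp_toP] at this
  have hnpos : 0 < 1 + Real.exp (-(Γ n W')) := by positivity
  have hinv : DifferentiableAt ℝ
      (fun Γ' : Fin N → PauliNI → ℝ => (Real.exp (-(Γ' n PauliNI.X)) +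
        Real.exp (-(Γ' n PauliNI.Y)) + Real.exp (-(Γ' n PauliNI.Z)) -
        Real.exp (-(Γ' n W')))⁻¹) Γ := hden.inv hdpos.ne'
  have hmul := hnum.mul hinv
  have hlog := hmul.log (by
    have : 0 < (1 + Real.exp (-(Γ n W'))) * (Real.exp (-(Γ n PauliNI.X)) +
        Real.exp (-(Γ n PauliNI.Y)) + Real.exp (-(Γ n PauliNI.Z)) -
        Real.exp (-(Γ n W')))⁻¹ := mul_pos hnpos (inv_pos.mpr hdpos)
    exact this.ne')
  show DifferentiableAt ℝ (fun Γ' : Fin N → PauliNI → ℝ => lam W' (Γ' n)) Γ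
  simp only [lam, div_eq_mul_inv]
  exact hlog

lemma differentiable_lamP_comp {N : ℕ} (P : Pauli) (n : Fin N) :
    Differentiable ℝ (fun Γ : Fin N → PauliNI → ℝ => lamP P (Γ n)) := by
  cases P with
  | I => exact differentiable_const 0
  | X => exact differentiable_lam_comp PauliNI.X n
  | Y => exact differentiable_lam_comp PauliNI.Y n
  | Z => exact differentiable_lam_comp PauliNI.Z n

lemma abs_inner_lt_one {M N : ℕ} (S : Fin M → Fin N → Pauli) (hS : ∀ m, ∃ n, S m n ≠ Pauli.I)
    (z : Fin M → Fin 2) (m : Fin M) (Γ : Fin N → PauliNI → ℝ) :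
    |(-1:ℝ) ^ (z m : ℕ) * ∏ l ∈ Finset.univ.filter (fun l => S m l ≠ Pauli.I),
        Real.tanh (lamP (S m l) (Γ l) / 2)| < 1 := by
  obtain ⟨n₀, hn₀⟩ := hS m
  have hne : (Finset.univ.filter (fun l => S m l ≠ Pauli.I)).Nonempty :=
    ⟨n₀, Finset.mem_filter.mpr ⟨Finset.mem_univ _, hn₀⟩⟩
  rw [abs_mul, abs_pow, abs_neg, abs_one, one_pow, one_mul]
  exact abs_prod_tanh_lt_one _ hne _

lemma differentiable_Jenergy {M N : ℕ} (S : Fin M → Fin N → Pauli)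
    (hS : ∀ m, ∃ n, S m n ≠ Pauli.I) (z : Fin M → Fin 2) (Λ : Fin N → PauliNI → ℝ) (η : ℝ) :
    Differentiable ℝ (Jenergy S z Λ η) := by
  apply Differentiable.sub
  · apply Differentiable.const_mul
    apply Differentiable.fun_sum; intro n _
    apply Differentiable.fun_sum; intro W _
    exact ((diff_eval n W).sub_const _).pow 2
  · apply Differentiable.const_mul
    apply Differentiable.fun_sum; intro m _
    intro Γ
    have hfac : ∀ l : Fin N, DifferentiableAt ℝ
        (fun Γ : Fin N → PauliNI → ℝ => Real.tanh (lamP (S m l) (Γ l) / 2)) Γ := by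
      intro l
      have h1 : Differentiable ℝ
          (fun Γ : Fin N → PauliNI → ℝ => lamP (S m l) (Γ l) / 2) := by
        intro Γ'
        simp only [div_eq_mul_inv]
        exact (differentiable_lamP_comp (S m l) l Γ').mul_const _
      exact (differentiable_tanh.comp h1) Γ
    have hprod : DifferentiableAt ℝ (fun Γ : Fin N → PauliNI → ℝ =>
        ∏ l ∈ Finset.univ.filter (fun l => S m l ≠ Pauli.I),
          Real.tanh (lamP (S m l) (Γ l) / 2)) Γ :=
      (HasFDerivAt.finset_prod (fun l _ => (hfac l).hasFDerivAt)).differentiableAt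
    have hF : DifferentiableAt ℝ (fun Γ : Fin N → PauliNI → ℝ =>
        (-1:ℝ) ^ (z m : ℕ) * ∏ l ∈ Finset.univ.filter (fun l => S m l ≠ Pauli.I),
          Real.tanh (lamP (S m l) (Γ l) / 2)) Γ := hprod.const_mul _
    obtain ⟨h1, h2⟩ := abs_lt.mp (abs_inner_lt_one S hS z m Γ)
    apply DifferentiableAt.const_mul
    simp only [_root_.artanh, div_eq_mul_inv]
    apply DifferentiableAt.const_mul
    have hsubne : (1:ℝ) - ((-1:ℝ) ^ (z m : ℕ) *
        ∏ l ∈ Finset.univ.filter (fun l => S m l ≠ Pauli.I),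
          Real.tanh (lamP (S m l) (Γ l) / 2)) ≠ 0 := by
      apply ne_of_gt; linarith
    have hinv := (hF.const_sub 1).inv hsubne
    have hmul := (hF.const_add 1).mul hinv
    apply hmul.log
    have : (0:ℝ) < (1 + ((-1:ℝ) ^ (z m : ℕ) *
        ∏ l ∈ Finset.univ.filter (fun l => S m l ≠ Pauli.I),
          Real.tanh (lamP (S m l) (Γ l) / 2))) * ((1:ℝ) - ((-1:ℝ) ^ (z m : ℕ) *
        ∏ l ∈ Finset.univ.filter (fun l => S m l ≠ Pauli.I),
          Real.tanh (lamP (S m l) (Γ l) / 2)))⁻¹ := by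
      apply mul_pos (by linarith)
      apply inv_pos.mpr; linarith
    exact this.ne'
lemma hasDerivAt_lamP_update (γ : PauliNI → ℝ) (W : PauliNI) (P : Pauli) (hP : P ≠ Pauli.I) :
    HasDerivAt (fun t => lamP P (Function.update γ W t))
      (if P = W.toP then -Real.exp (-(γ W)) / (1 + Real.exp (-(γ W)))
       else Real.exp (-(γ W)) /
         (Real.exp (-(γ PauliNI.X)) + Real.exp (-(γ PauliNI.Y)) + Real.exp (-(γ PauliNI.Z))
           - pexp P γ))
      (γ W) := by
  have E1 := Real.exp_pos (-(γ PauliNI.X))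
  have E2 := Real.exp_pos (-(γ PauliNI.Y))
  have E3 := Real.exp_pos (-(γ PauliNI.Z))
  set eX := Real.exp (-(γ PauliNI.X)) with heX
  set eY := Real.exp (-(γ PauliNI.Y)) with heY
  set eZ := Real.exp (-(γ PauliNI.Z)) with heZ
  cases P with
  | I => exact absurd rfl hP
  | X =>
    cases W with
    | X =>
      simp only [lamP, lam, pexp, PauliNI.toP, Function.update_apply, reduceCtorEq, if_true,
        if_false, reduceIte]
      have hu := (hasDerivAt_expneg (γ PauliNI.X)).const_add 1
      have hv := (((hasDerivAt_expneg (γ PauliNI.X)).add_const eY).add_const eZ).fun_sub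
        (hasDerivAt_expneg (γ PauliNI.X))
      have h := hd_log_div hu hv (by positivity) (by linarith)
      convert h using 1
      ring
    | Y =>
      simp only [lamP, lam, pexp, PauliNI.toP, Function.update_apply, reduceCtorEq, if_true,
        if_false, reduceIte]
      have hu := hasDerivAt_const (γ PauliNI.Y) (1 + eX)
      have hv := ((((hasDerivAt_expneg (γ PauliNI.Y)).const_add eX).add_const eZ).sub_const eX)
      have h := hd_log_div hu hv (by positivity) (by linarith)
      convert h using 1
      ring
    | Z =>
      simp only [lamP, lam, pexp, PauliNI.toP, Function.update_apply, reduceCtorEq, if_true,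
        if_false, reduceIte]
      have hu := hasDerivAt_const (γ PauliNI.Z) (1 + eX)
      have hv := (((hasDerivAt_expneg (γ PauliNI.Z)).const_add (eX + eY)).sub_const eX)
      have h := hd_log_div hu hv (by positivity) (by linarith)
      convert h using 1
      ring
  | Y =>
    cases W with
    | X =>
      simp only [lamP, lam, pexp, PauliNI.toP, Function.update_apply, reduceCtorEq, if_true,
        if_false, reduceIte]
      have hu := hasDerivAt_const (γ PauliNI.X) (1 + eY)
      have hv := ((((hasDerivAt_expneg (γ PauliNI.X)).add_const eY).add_const eZ).sub_const eY)
      have h := hd_log_div hu hv (by positivity) (by linarith)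
      convert h using 1
      ring
    | Y =>
      simp only [lamP, lam, pexp, PauliNI.toP, Function.update_apply, reduceCtorEq, if_true,
        if_false, reduceIte]
      have hu := (hasDerivAt_expneg (γ PauliNI.Y)).const_add 1
      have hv := (((hasDerivAt_expneg (γ PauliNI.Y)).const_add eX).add_const eZ).fun_sub
        (hasDerivAt_expneg (γ PauliNI.Y))
      have h := hd_log_div hu hv (by positivity) (by linarith)
      convert h using 1
      ring
    | Z =>
      simp only [lamP, lam, pexp, PauliNI.toP, Function.update_apply, reduceCtorEq, if_true,
        if_false, reduceIte]
      have hu := hasDerivAt_const (γ PauliNI.Z) (1 + eY)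
      have hv := (((hasDerivAt_expneg (γ PauliNI.Z)).const_add (eX + eY)).sub_const eY)
      have h := hd_log_div hu hv (by positivity) (by linarith)
      convert h using 1
      ring
  | Z =>
    cases W with
    | X =>
      simp only [lamP, lam, pexp, PauliNI.toP, Function.update_apply, reduceCtorEq, if_true,
        if_false, reduceIte]
      have hu := hasDerivAt_const (γ PauliNI.X) (1 + eZ)
      have hv := ((((hasDerivAt_expneg (γ PauliNI.X)).add_const eY).add_const eZ).sub_const eZ)
      have h := hd_log_div hu hv (by positivity) (by linarith)
      convert h using 1
      ring
    | Y =>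
      simp only [lamP, lam, pexp, PauliNI.toP, Function.update_apply, reduceCtorEq, if_true,
        if_false, reduceIte]
      have hu := hasDerivAt_const (γ PauliNI.Y) (1 + eZ)
      have hv := ((((hasDerivAt_expneg (γ PauliNI.Y)).const_add eX).add_const eZ).sub_const eZ)
      have h := hd_log_div hu hv (by positivity) (by linarith)
      convert h using 1
      ring
    | Z =>
      simp only [lamP, lam, pexp, PauliNI.toP, Function.update_apply, reduceCtorEq, if_true,
        if_false, reduceIte]
      have hu := (hasDerivAt_expneg (γ PauliNI.Z)).const_add 1
      have hv := (((hasDerivAt_expneg (γ PauliNI.Z)).const_add (eX + eY)).fun_sub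
        (hasDerivAt_expneg (γ PauliNI.Z)))
      have h := hd_log_div hu hv (by positivity) (by linarith)
      convert h using 1
      ring

/-- The BP energy function `J` is differentiable and its partial derivatives are given
by Eq. (8) of the paper. -/

theorem Jenergy_gradient {M N : ℕ} (hM : 1 ≤ M) (hN : 1 ≤ N)
    (S : Fin M → Fin N → Pauli) (hS : ∀ m, ∃ n, S m n ≠ Pauli.I)
    (z : Fin M → Fin 2) (Λ : Fin N → PauliNI → ℝ) (η : ℝ) (hη : 0 < η) :
    Differentiable ℝ (Jenergy S z Λ η) ∧
    ∀ (Γ : Fin N → PauliNI → ℝ) (n : Fin N) (W : PauliNI),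
      HasDerivAt
        (fun t => Jenergy S z Λ η (Function.update Γ n (Function.update (Γ n) W t)))
        (Γ n W - Λ n W
          + ∑ m ∈ Finset.univ.filter (fun m => S m n = W.toP),
              η * gfac S Γ m n * (Real.exp (-(Γ n W)) / (1 + Real.exp (-(Γ n W)))) *
                tilDelta S z Γ m n
          - ∑ m ∈ Finset.univ.filter (fun m => S m n ≠ Pauli.I ∧ S m n ≠ W.toP),
              η * gfac S Γ m n *
                (Real.exp (-(Γ n W)) /
                  (Real.exp (-(Γ n PauliNI.X)) + Real.exp (-(Γ n PauliNI.Y)) +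
                    Real.exp (-(Γ n PauliNI.Z)) - pexp (S m n) (Γ n))) *
                tilDelta S z Γ m n)
        (Γ n W) := by
  refine ⟨differentiable_Jenergy S hS z Λ η, ?_⟩
  intro Γ n W
  -- abbreviations
  set D0 : Fin M → ℝ := fun m =>
    if S m n = Pauli.I then 0 else
      gfac S Γ m n * tilDelta S z Γ m n *
        (if S m n = W.toP then -Real.exp (-(Γ n W)) / (1 + Real.exp (-(Γ n W)))
         else Real.exp (-(Γ n W)) /
           (Real.exp (-(Γ n PauliNI.X)) + Real.exp (-(Γ n PauliNI.Y)) +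
             Real.exp (-(Γ n PauliNI.Z)) - pexp (S m n) (Γ n))) with hD0
  -- Part A : quadratic part
  have hA : HasDerivAt
      (fun t => ∑ n', ∑ W', (Function.update Γ n (Function.update (Γ n) W t) n' W' - Λ n' W')^2)
      (∑ n' : Fin N, ∑ W' : PauliNI,
        (if n' = n ∧ W' = W then 2*(Γ n W - Λ n W) else 0)) (Γ n W) := by
    apply HasDerivAt.fun_sum; intro n' _
    apply HasDerivAt.fun_sum; intro W' _
    by_cases h1 : n' = n
    · subst h1
      by_cases h2 : W' = W
      · subst h2
        rw [if_pos ⟨rfl, rfl⟩]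
        simp only [Function.update_self]
        have h := ((hasDerivAt_id (Γ n' W')).sub_const (Λ n' W')).pow 2
        refine h.congr_deriv ?_; symm
        simp
      · rw [if_neg (by simp [h2])]
        simp only [Function.update_self, Function.update_of_ne h2]
        exact hasDerivAt_const _ _
    · rw [if_neg (by simp [h1])]
      simp only [Function.update_of_ne h1]
      exact hasDerivAt_const _ _
  -- Part B : the artanh terms
  have key : ∀ m : Fin M, HasDerivAt
      (fun t => 2 * _root_.artanh ((-1:ℝ) ^ (z m : ℕ) *
        ∏ l ∈ Finset.univ.filter (fun l => S m l ≠ Pauli.I),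
          Real.tanh (lamP (S m l) (Function.update Γ n (Function.update (Γ n) W t) l) / 2)))
      (D0 m) (Γ n W) := by
    intro m
    rw [hD0]
    simp only []
    by_cases hm : S m n = Pauli.I
    · rw [if_pos hm]
      have hfun : (fun t => 2 * _root_.artanh ((-1:ℝ) ^ (z m : ℕ) *
          ∏ l ∈ Finset.univ.filter (fun l => S m l ≠ Pauli.I),
            Real.tanh (lamP (S m l) (Function.update Γ n (Function.update (Γ n) W t) l) / 2)))
          = (fun _ : ℝ => 2 * _root_.artanh ((-1:ℝ) ^ (z m : ℕ) *
          ∏ l ∈ Finset.univ.filter (fun l => S m l ≠ Pauli.I),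
            Real.tanh (lamP (S m l) (Γ l) / 2))) := by
        funext t
        have : ∏ l ∈ Finset.univ.filter (fun l => S m l ≠ Pauli.I),
            Real.tanh (lamP (S m l) (Function.update Γ n (Function.update (Γ n) W t) l) / 2)
            = ∏ l ∈ Finset.univ.filter (fun l => S m l ≠ Pauli.I),
            Real.tanh (lamP (S m l) (Γ l) / 2) := by
          refine Finset.prod_congr rfl (fun l hl => ?_)
          have hln : l ≠ n := fun h => (Finset.mem_filter.mp hl).2 (by rw [h]; exact hm)
          rw [Function.update_of_ne hln]
        rw [this]
      rw [hfun]
      exact hasDerivAt_const _ _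
    · rw [if_neg hm]
      have hnmem : n ∈ Finset.univ.filter (fun l => S m l ≠ Pauli.I) :=
        Finset.mem_filter.mpr ⟨Finset.mem_univ _, hm⟩
      set K : ℝ := ∏ l ∈ (Finset.univ.filter (fun l => S m l ≠ Pauli.I)).erase n,
        Real.tanh (lamP (S m l) (Γ l) / 2) with hK
      have hfun : (fun t => 2 * _root_.artanh ((-1:ℝ) ^ (z m : ℕ) *
          ∏ l ∈ Finset.univ.filter (fun l => S m l ≠ Pauli.I),
            Real.tanh (lamP (S m l) (Function.update Γ n (Function.update (Γ n) W t) l) / 2)))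
          = (fun t : ℝ => 2 * _root_.artanh ((-1:ℝ) ^ (z m : ℕ) *
            (Real.tanh (lamP (S m n) (Function.update (Γ n) W t) / 2) * K))) := by
        funext t
        rw [← Finset.mul_prod_erase _ _ hnmem, Function.update_self]
        rw [Finset.prod_congr rfl (fun l hl => ?_)]
        rw [Function.update_of_ne (Finset.mem_erase.mp hl).1]
      rw [hfun]
      have hup : Function.update (Γ n) W (Γ n W) = Γ n := Function.update_eq_self _ _
      have hlam := hasDerivAt_lamP_update (Γ n) W (S m n) hm
      have hlam2 := hlam.div_const (2:ℝ)
      have hT := (hasDerivAt_tanh'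
        (lamP (S m n) (Function.update (Γ n) W (Γ n W)) / 2)).comp (Γ n W) hlam2
      rw [hup] at hT
      have hF := (hT.mul_const K).const_mul ((-1:ℝ) ^ (z m : ℕ))
      have habs : |(-1:ℝ) ^ (z m : ℕ) * (Real.tanh (lamP (S m n) (Γ n) / 2) * K)| < 1 := by
        have h := abs_inner_lt_one S hS z m Γ
        rw [← Finset.mul_prod_erase _ _ hnmem] at h
        exact h
      have habs' : |(-1:ℝ) ^ (z m : ℕ) *
          (Real.tanh (lamP (S m n) (Function.update (Γ n) W (Γ n W)) / 2) * K)| < 1 := by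
        rw [hup]; exact habs
      have hAT := (hasDerivAt_artanh habs').comp (Γ n W) hF
      rw [hup] at hAT
      have hfinal := hAT.const_mul (2:ℝ)
      refine hfinal.congr_deriv ?_; symm
      -- algebra
      have hQabs := abs_inner_lt_one S hS z m Γ
      have hQ : Real.tanh (lamP (S m n) (Γ n) / 2) * K
          = ∏ l ∈ Finset.univ.filter (fun l => S m l ≠ Pauli.I),
            Real.tanh (lamP (S m l) (Γ l) / 2) := by
        rw [hK]
        exact Finset.mul_prod_erase _ (fun l => Real.tanh (lamP (S m l) (Γ l) / 2)) hnmem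
      have hX2 : ((-1:ℝ) ^ (z m : ℕ) * (Real.tanh (lamP (S m n) (Γ n) / 2) * K)) ^ 2
          = (∏ l ∈ Finset.univ.filter (fun l => S m l ≠ Pauli.I),
              Real.tanh (lamP (S m l) (Γ l) / 2)) ^ 2 := by
        rw [mul_pow, ← pow_mul, mul_comm (z m : ℕ) 2, pow_mul, neg_one_sq, one_pow, one_mul, hQ]
      have hQlt : |∏ l ∈ Finset.univ.filter (fun l => S m l ≠ Pauli.I),
          Real.tanh (lamP (S m l) (Γ l) / 2)| < 1 := by
        obtain ⟨n₀, hn₀⟩ := hS m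
        exact abs_prod_tanh_lt_one _ ⟨n₀, Finset.mem_filter.mpr ⟨Finset.mem_univ _, hn₀⟩⟩ _
      have h1mQ : (0:ℝ) < 1 - (∏ l ∈ Finset.univ.filter (fun l => S m l ≠ Pauli.I),
          Real.tanh (lamP (S m l) (Γ l) / 2)) ^ 2 := by
        have := (sq_lt_one_iff_abs_lt_one _).mpr hQlt
        linarith
      have hepos : (0:ℝ) < 1 + Real.exp (-(Γ n W)) := by positivity
      have hdpos := den_pos (Γ n) (S m n)
      rw [hX2]
      simp only [gfac, tilDelta]
      by_cases hW : S m n = W.toP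
      · simp only [if_pos hW]
        ring
      · simp only [if_neg hW]
        ring
  -- assemble
  have hsum := HasDerivAt.fun_sum (u := Finset.univ) (fun m _ => key m)
  have htotal := (hA.const_mul (1/2 : ℝ)).fun_sub (hsum.const_mul η)
  -- identify functions
  have hgoalfun : (fun t => Jenergy S z Λ η (Function.update Γ n (Function.update (Γ n) W t)))
      = fun t => 1/2 * (∑ n', ∑ W',
          (Function.update Γ n (Function.update (Γ n) W t) n' W' - Λ n' W')^2)
        - η * ∑ m, 2 * _root_.artanh ((-1:ℝ) ^ (z m : ℕ) *
            ∏ l ∈ Finset.univ.filter (fun l => S m l ≠ Pauli.I),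
              Real.tanh (lamP (S m l) (Function.update Γ n (Function.update (Γ n) W t) l) / 2)) := by
    funext t
    simp only [Jenergy]
  rw [hgoalfun]
  refine htotal.congr_deriv ?_; symm
  -- derivative equality
  have e1 : (∑ n' : Fin N, ∑ W' : PauliNI,
      (if n' = n ∧ W' = W then 2*(Γ n W - Λ n W) else (0:ℝ))) = 2*(Γ n W - Λ n W) := by
    rw [Finset.sum_eq_single n]
    · rw [Finset.sum_eq_single W]
      · simp
      · intro b _ hb; simp [hb]
      · simp
    · intro b _ hb; simp [hb]
    · simp
  rw [e1]
  -- split the sum over m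
  have hz1 : ∑ m ∈ Finset.univ.filter (fun m => ¬ S m n ≠ Pauli.I), D0 m = 0 := by
    refine Finset.sum_eq_zero (fun m hm => ?_)
    have h := not_not.mp (Finset.mem_filter.mp hm).2
    rw [hD0]
    simp only [if_pos h]
  have hfilter1 : (Finset.univ.filter (fun m => S m n ≠ Pauli.I)).filter
      (fun m => S m n = W.toP) = Finset.univ.filter (fun m => S m n = W.toP) := by
    rw [Finset.filter_filter]
    refine Finset.filter_congr (fun m _ => ?_)
    constructor
    · exact fun h => h.2
    · exact fun h => ⟨by rw [h]; exact toP_ne_I W, h⟩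
  have hfilter2 : (Finset.univ.filter (fun m => S m n ≠ Pauli.I)).filter
      (fun m => ¬ S m n = W.toP)
      = Finset.univ.filter (fun m => S m n ≠ Pauli.I ∧ S m n ≠ W.toP) := by
    rw [Finset.filter_filter]
  have hsplit : ∑ m, D0 m
      = ∑ m ∈ Finset.univ.filter (fun m => S m n = W.toP), D0 m
        + ∑ m ∈ Finset.univ.filter (fun m => S m n ≠ Pauli.I ∧ S m n ≠ W.toP), D0 m := by
    rw [← Finset.sum_filter_add_sum_filter_not Finset.univ (fun m => S m n ≠ Pauli.I) D0,
      hz1, add_zero,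
      ← Finset.sum_filter_add_sum_filter_not
        (Finset.univ.filter (fun m => S m n ≠ Pauli.I)) (fun m => S m n = W.toP) D0,
      hfilter1, hfilter2]
  rw [hsplit]
  have hterm1 : ∀ m ∈ Finset.univ.filter (fun m => S m n = W.toP),
      η * D0 m = -(η * gfac S Γ m n * (Real.exp (-(Γ n W)) / (1 + Real.exp (-(Γ n W)))) *
        tilDelta S z Γ m n) := by
    intro m hm
    have h := (Finset.mem_filter.mp hm).2
    rw [hD0]
    simp only []
    rw [if_neg (show ¬ S m n = Pauli.I by rw [h]; exact toP_ne_I W), if_pos h]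
    ring
  have hterm2 : ∀ m ∈ Finset.univ.filter (fun m => S m n ≠ Pauli.I ∧ S m n ≠ W.toP),
      η * D0 m = η * gfac S Γ m n *
        (Real.exp (-(Γ n W)) /
          (Real.exp (-(Γ n PauliNI.X)) + Real.exp (-(Γ n PauliNI.Y)) +
            Real.exp (-(Γ n PauliNI.Z)) - pexp (S m n) (Γ n))) * tilDelta S z Γ m n := by
    intro m hm
    obtain ⟨h1, h2⟩ := (Finset.mem_filter.mp hm).2
    rw [hD0]
    simp only []
    rw [if_neg h1, if_neg h2]
    ring
  rw [mul_add, Finset.mul_sum, Finset.mul_sum, Finset.sum_congr rfl hterm1,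
    Finset.sum_congr rfl hterm2, Finset.sum_neg_distrib]
  ring
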